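/- arXiv:0810.1942 — 2 statements merged into one kernel-verified Lean document; each statement's English description precedes it below -/
import Mathlib

section
/- (Bestvina's example: C⁰ actions of ℤ⊕ℤ on the plane realize every Euler number) For every integer n there exist commuting homeomorphisms α, β of ℂ, both fixing 0 (so that they restrict to commuting homeomorphisms of ℂ ∖ {0}), which are C^∞ diffeomorphisms away from the origin, such that for any deck-equivariant lifts α̃, β̃ of α, β through the universal covering exp : ℂ → ℂ ∖ {0}, the commutator [α̃,β̃] is the translation z ↦ z + 2πin. In particular, the resulting ℤ⊕ℤ action on the plane by homeomorphisms has Euler number n. -/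
open Complex
open scoped commutatorElement

/-- A bijection of `ℂ` is a homeomorphism if it is continuous with continuous
inverse. -/
def IsHomeoPlane (f : Equiv.Perm ℂ) : Prop :=
  Continuous (⇑f) ∧ Continuous (⇑f.symm)

/-- `αl` is a deck-equivariant lift through the universal covering
`exp : ℂ → ℂ ∖ {0}` of (the restriction to `ℂ ∖ {0}` of) a homeomorphism `α`
of `ℂ` fixing `0`: `exp ∘ αl = α ∘ exp` and `αl (z + 2πi) = αl z + 2πi`. -/
def IsDeckEquivariantLift (α : Equiv.Perm ℂ) (αl : Equiv.Perm ℂ) : Prop :=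
  (∀ z : ℂ, Complex.exp (αl z) = α (Complex.exp z)) ∧
  (∀ z : ℂ, αl (z + 2 * Real.pi * I) = αl z + 2 * Real.pi * I)

/-- The map `w ↦ w · e^{2π i m log |w|}`, a homeomorphism of `ℂ` fixing `0`. -/
noncomputable def phiFun (m : ℤ) : ℂ → ℂ :=
  fun w => w * Complex.exp (((2 * Real.pi * (m * Real.log (‖w‖)) : ℝ) : ℂ) * I)

lemma abs_mul_exp (w : ℂ) (r : ℝ) :
    ‖w * Complex.exp ((r : ℂ) * I)‖ = ‖w‖ := by
  rw [norm_mul, Complex.norm_exp_ofReal_mul_I, mul_one]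

lemma abs_phiFun (m : ℤ) (w : ℂ) : ‖phiFun m w‖ = ‖w‖ :=
  abs_mul_exp w _

lemma phiFun_zero (m : ℤ) : phiFun m 0 = 0 := by simp [phiFun]

lemma phiFun_phiFun (m m' : ℤ) (w : ℂ) : phiFun m (phiFun m' w) = phiFun (m + m') w := by
  unfold phiFun
  rw [abs_mul_exp, mul_assoc, ← Complex.exp_add]
  congr 1
  congr 1
  push_cast
  ring

/-- The homeomorphism `α` for Euler number `m`. -/
noncomputable def alphaE (m : ℤ) : Equiv.Perm ℂ where
  toFun := phiFun m
  invFun := phiFun (-m)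
  left_inv := fun w => by
    rw [phiFun_phiFun]; simp [phiFun]
  right_inv := fun w => by
    rw [phiFun_phiFun]; simp [phiFun]

lemma continuous_phiFun (m : ℤ) : Continuous (phiFun m) := by
  rw [continuous_iff_continuousAt]
  intro x
  by_cases hx : x = 0
  · subst hx
    unfold ContinuousAt
    rw [phiFun_zero]
    rw [tendsto_zero_iff_norm_tendsto_zero]
    have : (fun w : ℂ => ‖phiFun m w‖) = fun w : ℂ => ‖w‖ := by
      funext w
      simp [abs_phiFun]
    rw [this]
    simpa using (continuous_norm (E := ℂ)).tendsto 0
  · have habs : ‖x‖ ≠ 0 := by simpa using hx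
    apply ContinuousAt.mul continuousAt_id
    apply Complex.continuous_exp.continuousAt.comp
    apply ContinuousAt.mul _ continuousAt_const
    apply Complex.continuous_ofReal.continuousAt.comp
    apply ContinuousAt.mul continuousAt_const
    apply ContinuousAt.mul continuousAt_const
    exact (Real.continuousAt_log habs).comp continuous_norm.continuousAt

lemma contDiffAt_phiFun (m : ℤ) {x : ℂ} (hx : x ≠ 0) : ContDiffAt ℝ (⊤ : ℕ∞) (phiFun m) x := by
  have habs : ContDiffAt ℝ (⊤ : ℕ∞) (fun w : ℂ => ‖w‖) x := by
    have := contDiffAt_norm ℝ (E := ℂ) hx (n := (⊤ : ℕ∞))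
    simpa using this
  have h1 : ContDiffAt ℝ (⊤ : ℕ∞) (fun w : ℂ => Real.log (‖w‖)) x := by
    have hlog : ContDiffAt ℝ (⊤ : ℕ∞) Real.log (‖x‖) :=
      Real.contDiffAt_log.mpr (by simpa using hx)
    exact hlog.comp x habs
  have h2 : ContDiffAt ℝ (⊤ : ℕ∞) (fun w : ℂ => (2 * Real.pi * (m * Real.log (‖w‖)) : ℝ)) x :=
    contDiffAt_const.mul (contDiffAt_const.mul h1)
  have h3 : ContDiffAt ℝ (⊤ : ℕ∞)
      (fun w : ℂ => ((2 * Real.pi * (m * Real.log (‖w‖)) : ℝ) : ℂ)) x :=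
    Complex.ofRealCLM.contDiff.contDiffAt.comp x h2
  have h4 : ContDiffAt ℝ (⊤ : ℕ∞)
      (fun w : ℂ => ((2 * Real.pi * (m * Real.log (‖w‖)) : ℝ) : ℂ) * I) x :=
    h3.mul contDiffAt_const
  have h5 : ContDiffAt ℝ (⊤ : ℕ∞)
      (fun w : ℂ => Complex.exp (((2 * Real.pi * (m * Real.log (‖w‖)) : ℝ) : ℂ) * I)) x :=
    ((Complex.contDiff_exp.restrict_scalars (𝕜' := ℂ) ℝ).contDiffAt).comp x h4
  exact contDiffAt_id.mul h5

lemma contDiffOn_phiFun (m : ℤ) : ContDiffOn ℝ (⊤ : ℕ∞) (phiFun m) {(0 : ℂ)}ᶜ :=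
  fun x hx => (contDiffAt_phiFun m (by simpa using hx)).contDiffWithinAt

/-- The homeomorphism `β`: multiplication by `e`. -/
noncomputable def betaE : Equiv.Perm ℂ where
  toFun := fun w => Complex.exp 1 * w
  invFun := fun w => (Complex.exp 1)⁻¹ * w
  left_inv := fun w => by
    field_simp
  right_inv := fun w => by
    field_simp

/-- A continuous integer-valued function on a preconnected space is constant. -/
lemma int_valued_const {X : Type*} [TopologicalSpace X] [PreconnectedSpace X]
    (K : X → ℝ) (hc : Continuous K) (hi : ∀ x, ∃ m : ℤ, K x = m) (a b : X) : K a = K b := by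
  have main : ∀ a b : X, ∀ ma mb : ℤ, K a = ma → K b = mb → ma < mb → False := by
    intro a b ma mb ha hb hlt
    have hmem : ((ma : ℝ) + 1/2) ∈ Set.Icc (K a) (K b) := by
      constructor
      · rw [ha]; linarith
      · rw [hb]
        have : (ma : ℝ) + 1 ≤ mb := by exact_mod_cast hlt
        linarith
    obtain ⟨x, hx⟩ := intermediate_value_univ a b hc hmem
    obtain ⟨mx, hmx⟩ := hi x
    rw [hmx] at hx
    have h2 : (2 * mx : ℝ) = 2 * ma + 1 := by linarith
    have h3 : (2 * mx : ℤ) = 2 * ma + 1 := by exact_mod_cast h2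
    omega
  by_contra hne
  obtain ⟨ma, ha⟩ := hi a
  obtain ⟨mb, hb⟩ := hi b
  rcases lt_trichotomy ma mb with h | h | h
  · exact main a b ma mb ha hb h
  · exact hne (by rw [ha, hb, h])
  · exact main b a mb ma hb ha h

/-- A continuous function on `ℂ` whose exponential is `1` everywhere is constant,
with purely imaginary value. -/
lemma lift_form {F G : ℂ → ℂ} (hF : Continuous F) (hG : Continuous G)
    (h : ∀ z, Complex.exp (F z) = Complex.exp (G z)) :
    ∃ c : ℂ, c.re = 0 ∧ ∀ z, F z = G z + c := by
  set g : ℂ → ℂ := fun z => F z - G z with hg_def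
  have hg : Continuous g := hF.sub hG
  have h1 : ∀ z, Complex.exp (g z) = 1 := by
    intro z
    rw [hg_def]
    simp only [Complex.exp_sub, h z]
    exact div_self (Complex.exp_ne_zero _)
  have key : ∀ z, ∃ m : ℤ, (g z).im = m * (2 * Real.pi) ∧ (g z).re = 0 := by
    intro z
    obtain ⟨m, hm⟩ := Complex.exp_eq_one_iff.mp (h1 z)
    refine ⟨m, ?_, ?_⟩
    · rw [hm]
      have : (m : ℂ) * (2 * Real.pi * I) = ((m * (2 * Real.pi) : ℝ) : ℂ) * I := by
        push_cast; ring
      rw [this]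
      simp
    · rw [hm]
      have : (m : ℂ) * (2 * Real.pi * I) = ((m * (2 * Real.pi) : ℝ) : ℂ) * I := by
        push_cast; ring
      rw [this]
      simp
  set K : ℂ → ℝ := fun z => (g z).im / (2 * Real.pi) with hK_def
  have hKc : Continuous K := (Complex.continuous_im.comp hg).div_const _
  have hKint : ∀ z, ∃ m : ℤ, K z = m := by
    intro z
    obtain ⟨m, him, _⟩ := key z
    refine ⟨m, ?_⟩
    rw [hK_def]
    simp only [him]
    field_simp
  have hconst : ∀ z, g z = g 0 := by
    intro z
    have hKz : K z = K 0 := int_valued_const K hKc hKint z 0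
    have him : (g z).im = (g 0).im := by
      have h2π : (2 * Real.pi) ≠ 0 := by positivity
      have := hKz
      rw [hK_def] at this
      field_simp at this
      exact this
    obtain ⟨_, _, hre⟩ := key z
    obtain ⟨_, _, hre0⟩ := key 0
    exact Complex.ext (by rw [hre, hre0]) him
  refine ⟨g 0, ?_, ?_⟩
  · obtain ⟨_, _, hre0⟩ := key 0
    exact hre0
  · intro z
    exact sub_eq_iff_eq_add'.mp (hconst z)

/-- **Bestvina's example.** For every integer `n` there are commuting
homeomorphisms `α, β` of `ℂ` fixing `0` (hence restricting to commuting
homeomorphisms of `ℂ ∖ {0}`), which are `C^∞` diffeomorphisms away from the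
origin, such that the commutator of any deck-equivariant homeomorphism lifts
`αl, βl` through `exp : ℂ → ℂ ∖ {0}` is the translation `z ↦ z + 2πin`. Hence
the resulting `ℤ ⊕ ℤ` action on the plane has Euler number `n`. -/
theorem bestvina_example (n : ℤ) :
    ∃ α β : Equiv.Perm ℂ,
      IsHomeoPlane α ∧ IsHomeoPlane β ∧
      (∀ z : ℂ, α (β z) = β (α z)) ∧
      α 0 = 0 ∧ β 0 = 0 ∧
      ContDiffOn ℝ (⊤ : ℕ∞) (⇑α) {(0 : ℂ)}ᶜ ∧ ContDiffOn ℝ (⊤ : ℕ∞) (⇑α.symm) {(0 : ℂ)}ᶜ ∧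
      ContDiffOn ℝ (⊤ : ℕ∞) (⇑β) {(0 : ℂ)}ᶜ ∧ ContDiffOn ℝ (⊤ : ℕ∞) (⇑β.symm) {(0 : ℂ)}ᶜ ∧
      ∀ αl βl : Equiv.Perm ℂ,
        IsHomeoPlane αl → IsHomeoPlane βl →
        IsDeckEquivariantLift α αl → IsDeckEquivariantLift β βl →
        ∀ z : ℂ, ⁅αl, βl⁆ z = z + 2 * Real.pi * I * n := by
  set T : ℂ := 2 * Real.pi * I * n with hT_def
  have hTre : ∀ r : ℝ, (T * (r : ℂ)).re = 0 := by
    intro r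
    have : T * (r : ℂ) = ((2 * Real.pi * n * r : ℝ) : ℂ) * I := by
      rw [hT_def]; push_cast; ring
    rw [this]; simp
  refine ⟨alphaE n, betaE, ⟨continuous_phiFun n, continuous_phiFun (-n)⟩,
    ⟨continuous_const.mul continuous_id, continuous_const.mul continuous_id⟩,
    ?_, phiFun_zero n, by simp [betaE], contDiffOn_phiFun n, contDiffOn_phiFun (-n),
    contDiffOn_const.mul contDiffOn_id, contDiffOn_const.mul contDiffOn_id, ?_⟩
  · -- commutativity of α and β
    intro z
    show phiFun n (Complex.exp 1 * z) = Complex.exp 1 * phiFun n z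
    by_cases hz : z = 0
    · simp [hz, phiFun_zero]
    · have habs : ‖Complex.exp 1 * z‖ = Real.exp 1 * ‖z‖ := by
        rw [norm_mul, Complex.norm_exp]
        norm_num
      have hlog : Real.log (‖Complex.exp 1 * z‖) = 1 + Real.log (‖z‖) := by
        rw [habs, Real.log_mul (Real.exp_ne_zero 1) (by simpa using hz), Real.log_exp]
      unfold phiFun
      rw [hlog]
      have hsplit : (((2 * Real.pi * (n * (1 + Real.log (‖z‖))) : ℝ) : ℂ) * I)
          = (n : ℂ) * (2 * Real.pi * I)
            + ((2 * Real.pi * (n * Real.log (‖z‖)) : ℝ) : ℂ) * I := by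
        push_cast; ring
      rw [hsplit, Complex.exp_add, Complex.exp_int_mul_two_pi_mul_I]
      ring
  · -- lifts
    intro αl βl hαlH hβlH hαlL hβlL z
    -- form of αl
    have keyα : ∀ z : ℂ, Complex.exp (αl z) = Complex.exp (z + T * (z.re : ℂ)) := by
      intro z
      rw [hαlL.1 z]
      show phiFun n (Complex.exp z) = _
      unfold phiFun
      rw [Complex.norm_exp, Real.log_exp, ← Complex.exp_add]
      congr 1
      rw [hT_def]
      push_cast
      ring
    have keyβ : ∀ z : ℂ, Complex.exp (βl z) = Complex.exp (z + 1) := by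
      intro z
      rw [hβlL.1 z]
      show Complex.exp 1 * Complex.exp z = _
      rw [Complex.exp_add]
      ring
    have hGα : Continuous (fun z : ℂ => z + T * (z.re : ℂ)) :=
      continuous_id.add (continuous_const.mul (Complex.continuous_ofReal.comp
        Complex.continuous_re))
    obtain ⟨cα, hcαre, hαl⟩ := lift_form hαlH.1 hGα keyα
    obtain ⟨cβ, hcβre, hβl⟩ := lift_form hβlH.1
      (show Continuous (fun z : ℂ => z + 1) from continuous_id.add continuous_const) keyβ
    -- inverses
    have hαs : ∀ w : ℂ, αl.symm w = w - T * (w.re : ℂ) - cα := by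
      intro w
      rw [Equiv.symm_apply_eq, hαl]
      have hre : (w - T * (w.re : ℂ) - cα).re = w.re := by
        simp [Complex.sub_re, hTre, hcαre]
      rw [hre]
      ring
    have hβs : ∀ w : ℂ, βl.symm w = w - 1 - cβ := by
      intro w
      rw [Equiv.symm_apply_eq, hβl]
      ring
    have hcomm : ⁅αl, βl⁆ z = αl (βl (αl.symm (βl.symm z))) := by
      simp [commutatorElement_def, Equiv.Perm.mul_apply, Equiv.Perm.inv_def]
    rw [hcomm, hβs, hαs, hβl, hαl]
    have r1 : (z - 1 - cβ).re = z.re - 1 := by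
      simp only [Complex.sub_re, Complex.one_re, hcβre]
      ring
    rw [r1]
    have r2 : (z - 1 - cβ - T * ((z.re - 1 : ℝ) : ℂ) - cα + 1 + cβ).re = z.re := by
      simp only [Complex.add_re, Complex.sub_re, Complex.one_re, hTre, hcαre, hcβre]
      ring
    rw [r2]
    rw [hT_def]
    push_cast
    ring
end

section
/- (Vanishing of the Euler class for C¹ actions of ℤ⊕ℤ with a common fixed point) Let α, β : ℝ² → ℝ² be commuting C¹ diffeomorphisms whose derivatives have everywhere positive determinant, and suppose α(0) = 0 and β(0) = 0. Identify ℝ² with ℂ, so α and β restrict to commuting homeomorphisms of ℂ ∖ {0}. Then for any deck-equivariant lifts α̃, β̃ through the universal covering exp : ℂ → ℂ ∖ {0}, the commutator [α̃,β̃] is the identity; that is, the action admits commuting lifts and its Euler number is 0. -/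
open Complex
open scoped commutatorElement

/-- An orientation-preserving `C¹` diffeomorphism of the plane `ℝ² ≅ ℂ`: a
`C¹` bijection with `C¹` inverse whose derivative has everywhere positive
determinant. -/
def IsOrientationPreservingC1Diffeo (f : Equiv.Perm ℂ) : Prop :=
  ContDiff ℝ 1 (⇑f) ∧ ContDiff ℝ 1 (⇑f.symm) ∧
  ∀ z : ℂ, 0 < LinearMap.det ((fderiv ℝ (⇑f) z) : ℂ →ₗ[ℝ] ℂ)

open Filter

local notation "π" => Real.pi




private lemma aux_const_of_int {X : Type*} [TopologicalSpace X] {s : Set X}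
    (hs : IsPreconnected s) {f : X → ℝ} (hf : ContinuousOn f s)
    (hint : ∀ z ∈ s, ∃ n : ℤ, f z = n * (2 * π)) :
    ∀ a ∈ s, ∀ b ∈ s, f a = f b := by
  intro a ha b hb
  obtain ⟨na, hna⟩ := hint a ha
  obtain ⟨nb, hnb⟩ := hint b hb
  have h2π : (0:ℝ) < 2 * π := by positivity
  set g : X → ℝ := fun z => f z / (2 * π) with hg
  have hgc : ContinuousOn g s := hf.div_const _
  have himg : IsPreconnected (g '' s) := hs.image g hgc
  have hga : g a = na := by simp only [hg, hna]; field_simp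
  have hgb : g b = nb := by simp only [hg, hnb]; field_simp
  have key : ∀ x ∈ g '' s, ∃ n : ℤ, x = (n : ℝ) := by
    rintro x ⟨z, hz, rfl⟩
    obtain ⟨n, hn⟩ := hint z hz
    exact ⟨n, by simp only [hg, hn]; field_simp⟩
  have hnlt : ∀ x ∈ g '' s, ∀ y ∈ g '' s, ¬ x < y := by
    intro x hx y hy hxy
    obtain ⟨mm, rfl⟩ := key x hx
    obtain ⟨nn, rfl⟩ := key y hy
    have hmn : mm < nn := by exact_mod_cast hxy
    have hmid : (mm : ℝ) + 1/2 ∈ g '' s := by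
      apply himg.ordConnected.out hx hy
      constructor
      · linarith
      · have : (mm:ℝ) + 1 ≤ nn := by exact_mod_cast hmn
        linarith
    obtain ⟨k, hk⟩ := key _ hmid
    have h2 : (2*k : ℤ) = 2*mm + 1 := by
      have : (mm : ℝ) + 1/2 = k := hk
      have : (2*k : ℝ) = 2*mm + 1 := by linarith
      exact_mod_cast this
    omega
  have hcast : (na:ℝ) = nb := by
    rcases lt_trichotomy ((na:ℝ)) ((nb:ℝ)) with h | h | h
    · exact absurd h (hnlt _ ⟨a, ha, hga⟩ _ ⟨b, hb, hgb⟩)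
    · exact h
    · exact absurd h (hnlt _ ⟨b, hb, hgb⟩ _ ⟨a, ha, hga⟩)
  rw [hna, hnb, hcast]

private lemma aux_const_of_intC {X : Type*} [TopologicalSpace X] {s : Set X}
    (hs : IsPreconnected s) {f : X → ℂ} (hf : ContinuousOn f s)
    (hint : ∀ z ∈ s, ∃ n : ℤ, f z = (n : ℂ) * (2 * (π:ℂ) * I)) :
    ∀ a ∈ s, ∀ b ∈ s, f a = f b := by
  have him : ∀ (n : ℤ), ((n : ℂ) * (2 * (π:ℂ) * I)).im = (n:ℝ) * (2 * π) := by
    intro n; simp [Complex.mul_im]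
  have h2π : (2 * π) ≠ 0 := by positivity
  intro a ha b hb
  obtain ⟨na, hna⟩ := hint a ha
  obtain ⟨nb, hnb⟩ := hint b hb
  have hconst := aux_const_of_int hs (f := fun z => (f z).im)
    (Complex.continuous_im.comp_continuousOn hf)
    (by intro z hz; obtain ⟨n, hn⟩ := hint z hz; exact ⟨n, show (f z).im = _ by rw [hn, him]⟩)
    a ha b hb
  rw [hna, hnb, him, him] at hconst
  have hnn : na = nb := by field_simp at hconst; exact_mod_cast hconst
  rw [hna, hnb, hnn]




noncomputable def Lam (p q : ℂ) (y : ℝ) : ℂ :=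
  Complex.log p + (y:ℂ) * I + Complex.log (1 + (q/p) * Complex.exp ((y:ℂ) * (-2*I)))

section LamFacts

variable {p q : ℂ}

lemma aux_hp (hq : ‖q‖ < ‖p‖) : p ≠ 0 := by
  intro h
  rw [h, norm_zero] at hq
  exact absurd hq (norm_nonneg q).not_gt

lemma aux_wlt (hq : ‖q‖ < ‖p‖) (y : ℝ) :
    ‖(q/p) * Complex.exp ((y:ℂ) * (-2*I))‖ < 1 := by
  have hp : p ≠ 0 := aux_hp hq
  have hre : (((y:ℂ)) * (-2*I)).re = 0 := by simp
  rw [norm_mul, norm_div, Complex.norm_exp, hre, Real.exp_zero, mul_one]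
  rw [div_lt_one (norm_pos_iff.2 (aux_hp hq))]
  exact hq

lemma aux_w_re (hq : ‖q‖ < ‖p‖) (y : ℝ) :
    0 < (1 + (q/p) * Complex.exp ((y:ℂ) * (-2*I))).re := by
  set w := (q/p) * Complex.exp ((y:ℂ) * (-2*I)) with hw
  have h1 : |w.re| ≤ ‖w‖ := Complex.abs_re_le_norm w
  have h2 := aux_wlt hq y
  rw [← hw] at h2
  rw [Complex.add_re, Complex.one_re]
  cases' abs_le.mp h1 with h1a h1b
  linarith

lemma aux_w_ne (hq : ‖q‖ < ‖p‖) (y : ℝ) :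
    (1 + (q/p) * Complex.exp ((y:ℂ) * (-2*I))) ≠ 0 := by
  intro h
  have := aux_w_re hq y
  rw [h] at this; simp at this

lemma aux_w_slit (hq : ‖q‖ < ‖p‖) (y : ℝ) :
    (1 + (q/p) * Complex.exp ((y:ℂ) * (-2*I))) ∈ Complex.slitPlane :=
  Complex.mem_slitPlane_iff.2 (Or.inl (aux_w_re hq y))

/-- L1 : exp of the lift gives the linear map on the circle -/
lemma Lam_exp (hq : ‖q‖ < ‖p‖) (y : ℝ) :
    Complex.exp (Lam p q y) = p * Complex.exp ((y:ℂ) * I) + q * Complex.exp (-((y:ℂ) * I)) := by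
  have hp : p ≠ 0 := aux_hp hq
  unfold Lam
  rw [Complex.exp_add, Complex.exp_add, Complex.exp_log hp,
    Complex.exp_log (aux_w_ne hq y)]
  have hE : Complex.exp ((y:ℂ) * I) * Complex.exp ((y:ℂ) * (-2*I)) =
      Complex.exp (-((y:ℂ) * I)) := by
    rw [← Complex.exp_add]; ring_nf
  rw [show Complex.exp (-((y:ℂ) * I)) = Complex.exp ((y:ℂ) * I) * Complex.exp ((y:ℂ) * (-2*I)) from hE.symm]
  field_simp

/-- L2 : equivariance -/
lemma Lam_equiv (hq : ‖q‖ < ‖p‖) (k : ℤ) (y : ℝ) :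
    Lam p q (y + 2*π*k) = Lam p q y + (k:ℂ) * (2*(π:ℂ)*I) := by
  unfold Lam
  have hE : ((((y + 2*π*k : ℝ)):ℂ)) * (-2*I) = (y:ℂ)*(-2*I) + ((-2*k : ℤ):ℂ) * (2*(π:ℂ)*I) := by
    push_cast; ring
  rw [hE, Complex.exp_add, Complex.exp_int_mul_two_pi_mul_I, mul_one]
  push_cast
  ring

/-- L3 : continuity -/
lemma Lam_continuous (hq : ‖q‖ < ‖p‖) : Continuous (Lam p q) := by
  have hwcont : Continuous (fun y : ℝ => 1 + (q/p) * Complex.exp ((y:ℂ) * (-2*I))) := by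
    apply continuous_const.add
    exact continuous_const.mul (Complex.continuous_exp.comp
      (Complex.continuous_ofReal.mul continuous_const))
  apply Continuous.add
  · exact continuous_const.add (Complex.continuous_ofReal.mul continuous_const)
  · rw [continuous_iff_continuousAt]
    intro y
    exact hwcont.continuousAt.clog (aux_w_slit hq y)

/-- derivative of Lam -/
lemma Lam_hasDerivAt (hq : ‖q‖ < ‖p‖) (y : ℝ) :
    HasDerivAt (Lam p q)
      (I + ((q/p) * Complex.exp ((y:ℂ) * (-2*I)) * (-2*I)) /
        (1 + (q/p) * Complex.exp ((y:ℂ) * (-2*I)))) y := by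
  have h1 : HasDerivAt (fun y : ℝ => (y:ℂ) * I) I y := by
    simpa using ((hasDerivAt_id y).ofReal_comp.mul_const I)
  have h2 : HasDerivAt (fun y : ℝ => (y:ℂ) * (-2*I)) (-2*I) y := by
    simpa using ((hasDerivAt_id y).ofReal_comp.mul_const (-2*I))
  have h3 : HasDerivAt (fun y : ℝ => 1 + (q/p) * Complex.exp ((y:ℂ) * (-2*I)))
      ((q/p) * Complex.exp ((y:ℂ) * (-2*I)) * (-2*I)) y := by
    have := (h2.cexp.const_mul (q/p)).const_add 1
    rw [mul_assoc]; exact this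
  have h4 := h3.clog_real (aux_w_slit hq y)
  have h5 := (h1.const_add (Complex.log p)).add h4
  exact h5

/-- L4 : monotonicity of the angle component -/
lemma Lam_im_monotone (hq : ‖q‖ < ‖p‖) :
    Monotone (fun y : ℝ => (Lam p q y).im) := by
  have hD : ∀ y : ℝ, HasDerivAt (fun y : ℝ => (Lam p q y).im)
      ((I + ((q/p) * Complex.exp ((y:ℂ) * (-2*I)) * (-2*I)) /
        (1 + (q/p) * Complex.exp ((y:ℂ) * (-2*I)))).im) y := by
    intro y
    exact (Complex.imCLM.hasFDerivAt.comp_hasDerivAt y (Lam_hasDerivAt hq y))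
  apply monotone_of_deriv_nonneg
  · exact fun y => (hD y).differentiableAt
  · intro y
    rw [(hD y).deriv]
    set w := (q/p) * Complex.exp ((y:ℂ) * (-2*I)) with hw
    have hne : 1 + w ≠ 0 := aux_w_ne hq y
    have habs : ‖w‖ < 1 := aux_wlt hq y
    have hkey : I + (w * (-2*I)) / (1 + w) = I * ((1 - w)/(1 + w)) := by
      field_simp
      ring
    rw [hkey]
    have him : (I * ((1 - w)/(1 + w))).im = ((1 - w)/(1 + w)).re := by
      simp [Complex.mul_im]
    rw [him, Complex.div_re]
    have hns : 0 < Complex.normSq (1 + w) := Complex.normSq_pos.2 hne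
    rw [← add_div]
    apply div_nonneg _ hns.le
    have h1 : Complex.normSq w < 1 := by
      rw [← Complex.sq_norm]
      nlinarith [norm_nonneg w]
    have hexp : (1-w).re * (1+w).re + (1-w).im * (1+w).im = 1 - Complex.normSq w := by
      simp [Complex.normSq_apply, Complex.sub_re, Complex.sub_im, Complex.add_re, Complex.add_im]
      ring
    rw [hexp]
    linarith

/-- L5 : bounded displacement of the angle component -/
lemma Lam_im_bound (hq : ‖q‖ < ‖p‖) (y : ℝ) :
    |(Lam p q y).im - y| ≤ |(Complex.log p).im| + π := by
  unfold Lam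
  rw [Complex.add_im, Complex.add_im]
  have h1 : ((y:ℂ) * I).im = y := by simp
  rw [h1]
  have h2 : (Complex.log (1 + (q/p) * Complex.exp ((y:ℂ) * (-2*I)))).im =
      (1 + (q/p) * Complex.exp ((y:ℂ) * (-2*I))).arg := Complex.log_im _
  rw [h2]
  have h3 := Complex.abs_arg_le_pi (1 + (q/p) * Complex.exp ((y:ℂ) * (-2*I)))
  have h4 : (Complex.log p).im + y + (1 + (q/p) * Complex.exp ((y:ℂ) * (-2*I))).arg - y
      = (Complex.log p).im + (1 + (q/p) * Complex.exp ((y:ℂ) * (-2*I))).arg := by ring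
  rw [h4]
  calc |(Complex.log p).im + (1 + (q/p) * Complex.exp ((y:ℂ) * (-2*I))).arg|
      ≤ |(Complex.log p).im| + |(1 + (q/p) * Complex.exp ((y:ℂ) * (-2*I))).arg| := abs_add_le _ _
    _ ≤ |(Complex.log p).im| + π := by linarith

/-- equivariance of the angle component -/
lemma Lam_im_equiv (hq : ‖q‖ < ‖p‖) (k : ℤ) (y : ℝ) :
    (Lam p q (y + 2*π*k)).im = (Lam p q y).im + 2*π*k := by
  rw [Lam_equiv hq k y, Complex.add_im]
  have : ((k:ℂ) * (2*(π:ℂ)*I)).im = 2*π*k := by simp [Complex.mul_im]; ring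
  rw [this]




private lemma aux_m_zero {θA θB : ℝ → ℝ} (hmA : Monotone θA) (hmB : Monotone θB)
    (heqA : ∀ (k : ℤ) (y : ℝ), θA (y + 2*π*k) = θA y + 2*π*k)
    (heqB : ∀ (k : ℤ) (y : ℝ), θB (y + 2*π*k) = θB y + 2*π*k)
    {CA : ℝ} (hCA : ∀ y, |θA y - y| ≤ CA)
    {m : ℤ} (hm : ∀ y, θA (θB y) = θB (θA y) + 2*π*m) : m = 0 := by
  have hπ : (0:ℝ) < 2*π := by positivity
  set F := fun y => θA (θB y) with hF
  have hFmono : Monotone F := hmA.comp hmB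
  have hFeq : ∀ (k : ℤ) (y : ℝ), F (y + 2*π*k) = F y + 2*π*k := by
    intro k y; rw [hF]; simp only; rw [heqB, heqA]
  -- F ∘ θA = θA ∘ F - 2πm
  have hkey : ∀ y, F (θA y) = θA (F y) - 2*π*m := by
    intro y
    have h1 : θB (θA y) = θA (θB y) + 2*π*(-m : ℤ) := by
      rw [hm y]; push_cast; ring
    calc F (θA y) = θA (θB (θA y)) := rfl
      _ = θA (θA (θB y) + 2*π*(-m:ℤ)) := by rw [h1]
      _ = θA (θA (θB y)) + 2*π*(-m:ℤ) := heqA _ _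
      _ = θA (F y) - 2*π*m := by push_cast; ring
  -- iterate equivariance
  have hFiter_eq : ∀ (n : ℕ) (k : ℤ) (y : ℝ), F^[n] (y + 2*π*k) = F^[n] y + 2*π*k := by
    intro n
    induction n with
    | zero => intro k y; simp
    | succ n ih =>
      intro k y
      rw [Function.iterate_succ_apply, hFeq, ih, ← Function.iterate_succ_apply]
  -- key iteration identity
  have hiter : ∀ n : ℕ, F^[n] (θA 0) = θA (F^[n] 0) - 2*π*((m*n : ℤ) : ℝ) := by
    intro n
    induction n with
    | zero => simp
    | succ n ih =>
      rw [Function.iterate_succ_apply', ih]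
      have : θA (F^[n] 0) - 2*π*((m*n : ℤ):ℝ) = θA (F^[n] 0) + 2*π*((-(m*n) : ℤ):ℝ) := by
        push_cast; ring
      rw [this, hFeq, hkey, Function.iterate_succ_apply']
      push_cast; ring
  -- bounds
  set j : ℤ := ⌈CA / (2*π)⌉ with hj
  have hCAj : CA ≤ 2*π*j := by
    have h1 : CA / (2*π) ≤ (j:ℝ) := Int.le_ceil _
    calc CA = (CA / (2*π)) * (2*π) := by field_simp
      _ ≤ (j:ℝ) * (2*π) := by apply mul_le_mul_of_nonneg_right h1 hπ.le
      _ = 2*π*j := by ring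
  have hbound : ∀ n : ℕ, |2*π*((m*n : ℤ):ℝ)| ≤ CA + 2*π*j := by
    intro n
    have h1 : |θA (F^[n] 0) - F^[n] 0| ≤ CA := hCA _
    have hθA0 : 0 - 2*π*j ≤ θA 0 ∧ θA 0 ≤ 0 + 2*π*j := by
      have := hCA 0
      cases' abs_le.mp this with ha hb
      constructor <;> linarith
    have hup : F^[n] (θA 0) ≤ F^[n] 0 + 2*π*j := by
      calc F^[n] (θA 0) ≤ F^[n] (0 + 2*π*j) := hFmono.iterate n hθA0.2
        _ = F^[n] 0 + 2*π*j := by rw [hFiter_eq]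
    have hdown : F^[n] 0 - 2*π*j ≤ F^[n] (θA 0) := by
      have : F^[n] (0 + 2*π*(-j : ℤ)) ≤ F^[n] (θA 0) := by
        apply hFmono.iterate n
        push_cast; linarith [hθA0.1]
      rw [hFiter_eq] at this
      push_cast at this
      linarith
    have h2 : 2*π*((m*n : ℤ):ℝ) = θA (F^[n] 0) - F^[n] (θA 0) := by
      rw [hiter n]; ring
    rw [h2]
    have : |θA (F^[n] 0) - F^[n] (θA 0)| ≤ |θA (F^[n] 0) - F^[n] 0| + |F^[n] 0 - F^[n] (θA 0)| := by
      have := abs_sub_le (θA (F^[n] 0)) (F^[n] 0) (F^[n] (θA 0))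
      linarith
    have h3 : |F^[n] 0 - F^[n] (θA 0)| ≤ 2*π*j := by
      rw [abs_le]; constructor <;> linarith
    linarith
  -- conclude
  by_contra hm0
  have hm1 : (1:ℝ) ≤ |(m:ℝ)| := by
    have : (1:ℤ) ≤ |m| := Int.one_le_abs (by omega)
    calc (1:ℝ) ≤ ((|m| : ℤ) : ℝ) := by exact_mod_cast this
      _ = |(m:ℝ)| := by push_cast; rfl
  obtain ⟨n, hn⟩ := exists_nat_gt ((CA + 2*π*j) / (2*π))
  have h1 := hbound n
  have h2 : 2*π*(n:ℝ) ≤ |2*π*((m*n : ℤ):ℝ)| := by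
    rw [abs_mul]
    have : |((m*n : ℤ):ℝ)| = |(m:ℝ)| * n := by
      push_cast; rw [abs_mul]; simp [abs_of_nonneg (Nat.cast_nonneg (α := ℝ) n)]
    rw [this, abs_of_pos hπ]
    have h4 : (n:ℝ) ≤ |(m:ℝ)| * n := le_mul_of_one_le_left (Nat.cast_nonneg n) hm1
    nlinarith [h4, hπ]
  have h3 : CA + 2*π*j < 2*π*n := by
    rw [div_lt_iff₀ hπ] at hn
    linarith
  linarith



private lemma aux_pq (A : ℂ →L[ℝ] ℂ) (hdet : 0 < LinearMap.det (A : ℂ →ₗ[ℝ] ℂ)) :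
    ∃ p q : ℂ, (∀ v : ℂ, A v = p * v + q * (starRingEnd ℂ) v) ∧
      ‖q‖ < ‖p‖ := by
  set a := A 1 with ha
  set b := A I with hb
  refine ⟨(a - I*b)/2, (a + I*b)/2, ?_, ?_⟩
  · intro v
    have hA : A v = (v.re:ℂ) * a + (v.im:ℂ) * b := by
      conv_lhs => rw [show v = v.re • (1:ℂ) + v.im • I by
        rw [Complex.real_smul, Complex.real_smul, mul_one, Complex.re_add_im]]
      rw [map_add, map_smul, map_smul, Complex.real_smul, Complex.real_smul, ← ha, ← hb]
    rw [hA, show (starRingEnd ℂ) v = ((2*v.re : ℝ) : ℂ) - v by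
      rw [← Complex.add_conj]; ring]
    have hv : v = (v.re:ℂ) + (v.im:ℂ)*I := (Complex.re_add_im v).symm
    have hI := Complex.I_mul_I
    push_cast
    linear_combination (Complex.I * b) * hv + ((v.im:ℂ) * b) * hI
  · -- determinant computation
    have hdet' : LinearMap.det (A : ℂ →ₗ[ℝ] ℂ) = a.re * b.im - b.re * a.im := by
      rw [← LinearMap.det_toMatrix Complex.basisOneI, Matrix.det_fin_two]
      have h00 : LinearMap.toMatrix Complex.basisOneI Complex.basisOneI
          (A : ℂ →ₗ[ℝ] ℂ) 0 0 = a.re := by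
        rw [LinearMap.toMatrix_apply]
        simp [Complex.coe_basisOneI_repr, Complex.coe_basisOneI, ha]
      have h01 : LinearMap.toMatrix Complex.basisOneI Complex.basisOneI
          (A : ℂ →ₗ[ℝ] ℂ) 0 1 = b.re := by
        rw [LinearMap.toMatrix_apply]
        simp [Complex.coe_basisOneI_repr, Complex.coe_basisOneI, hb]
      have h10 : LinearMap.toMatrix Complex.basisOneI Complex.basisOneI
          (A : ℂ →ₗ[ℝ] ℂ) 1 0 = a.im := by
        rw [LinearMap.toMatrix_apply]
        simp [Complex.coe_basisOneI_repr, Complex.coe_basisOneI, ha]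
      have h11 : LinearMap.toMatrix Complex.basisOneI Complex.basisOneI
          (A : ℂ →ₗ[ℝ] ℂ) 1 1 = b.im := by
        rw [LinearMap.toMatrix_apply]
        simp [Complex.coe_basisOneI_repr, Complex.coe_basisOneI, hb]
      rw [h00, h01, h10, h11]
    rw [hdet'] at hdet
    -- normSq comparison
    have hnq : Complex.normSq ((a + I*b)/2) < Complex.normSq ((a - I*b)/2) := by
      have e1 : Complex.normSq ((a + I*b)/2) =
          ((a.re - b.im)^2 + (a.im + b.re)^2)/4 := by
        simp [Complex.normSq_apply, Complex.div_re, Complex.div_im, Complex.normSq_apply,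
          Complex.add_re, Complex.add_im, Complex.mul_re, Complex.mul_im]
        ring
      have e2 : Complex.normSq ((a - I*b)/2) =
          ((a.re + b.im)^2 + (a.im - b.re)^2)/4 := by
        simp [Complex.normSq_apply, Complex.div_re, Complex.div_im, Complex.normSq_apply,
          Complex.sub_re, Complex.sub_im, Complex.mul_re, Complex.mul_im]
        ring
      rw [e1, e2]
      nlinarith [hdet]
    by_contra hle
    push_neg at hle
    have : Complex.normSq ((a - I*b)/2) ≤ Complex.normSq ((a + I*b)/2) := by
      rw [← Complex.sq_norm, ← Complex.sq_norm]
      apply pow_le_pow_left₀ (norm_nonneg _) hle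
    linarith


private lemma aux_lift (αf : ℂ → ℂ) (A : ℂ →L[ℝ] ℂ) (p q : ℂ)
    (hrep : ∀ v : ℂ, A v = p * v + q * (starRingEnd ℂ) v)
    (hq : ‖q‖ < ‖p‖)
    (hd : HasFDerivAt αf A 0) (h0 : αf 0 = 0)
    (αl : ℂ → ℂ) (hcont : Continuous αl)
    (hlift : ∀ z : ℂ, Complex.exp (αl z) = αf (Complex.exp z)) :
    ∃ k : ℤ, Filter.Tendsto
      (fun z : ℂ => αl z - ((z.re:ℂ) + Lam p q z.im) - (k:ℂ) * (2*(π:ℂ)*I))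
      (Filter.comap Complex.re Filter.atBot) (nhds 0) := by
  have hπ : (0:ℝ) < π := Real.pi_pos
  set c : ℝ := ‖p‖ - ‖q‖ with hc
  have hcpos : 0 < c := by rw [hc]; linarith
  -- lower bound for A
  have hlow : ∀ v : ℂ, c * ‖v‖ ≤ ‖A v‖ := by
    intro v
    have h1 : ‖p*v‖ ≤ ‖A v‖ + ‖q * (starRingEnd ℂ) v‖ := by
      calc ‖p*v‖ = ‖(A v) - q * (starRingEnd ℂ) v‖ := by rw [hrep]; ring_nf
        _ ≤ ‖A v‖ + ‖q * (starRingEnd ℂ) v‖ := by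
            apply (norm_sub_le _ _).trans; simp
    rw [norm_mul, norm_mul, Complex.norm_conj] at h1
    rw [hc]
    nlinarith [norm_nonneg v]
  have hAne : ∀ v : ℂ, v ≠ 0 → A v ≠ 0 := by
    intro v hv hAv
    have := hlow v
    rw [hAv, norm_zero] at this
    have : ‖v‖ ≤ 0 := by nlinarith [norm_pos_iff.2 hv]
    exact absurd this (norm_pos_iff.2 hv).not_ge
  -- littleO
  have hlittleo : (fun w => αf w - A w) =o[nhds 0] (fun w : ℂ => w) := by
    have := hd.isLittleO
    simpa [h0] using this
  -- f tends to 0 within punctured nbhd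
  have hftend : Filter.Tendsto (fun v : ℂ => (αf v - A v) / (A v))
      (nhdsWithin 0 {0}ᶜ) (nhds 0) := by
    rw [NormedAddCommGroup.tendsto_nhds_zero]
    intro ε hε
    have hev := hlittleo.def (show (0:ℝ) < ε*c/2 by positivity)
    rw [Filter.eventually_iff_exists_mem]
    obtain ⟨s, hs, hsub⟩ := hev.exists_mem
    refine ⟨s ∩ {0}ᶜ, Filter.inter_mem (mem_nhdsWithin_of_mem_nhds hs) self_mem_nhdsWithin, ?_⟩
    rintro v ⟨hv1, hv2⟩
    have hvne : v ≠ 0 := hv2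
    have h1 : ‖αf v - A v‖ ≤ ε*c/2 * ‖v‖ := hsub v hv1
    have h2 : ‖(αf v - A v) / (A v)‖ = ‖αf v - A v‖ / ‖A v‖ := norm_div _ _
    rw [h2]
    have h3 : c * ‖v‖ ≤ ‖A v‖ := by
      have := hlow v
      simpa using this
    have hvpos : 0 < ‖v‖ := norm_pos_iff.2 hvne
    have h4 : ‖αf v - A v‖ / ‖A v‖ ≤ (ε*c/2 * ‖v‖) / (c * ‖v‖) :=
      div_le_div₀ (by positivity) h1 (by positivity) h3
    have h5 : (ε*c/2 * ‖v‖) / (c * ‖v‖) = ε/2 := by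
      rw [div_eq_iff (mul_pos hcpos hvpos).ne']
      ring
    rw [h5] at h4
    linarith
  -- exp z tends to 0 within punctured nbhd, along the left filter
  have hexp0 : Filter.Tendsto (fun z : ℂ => Complex.exp z)
      (Filter.comap Complex.re Filter.atBot) (nhdsWithin 0 {0}ᶜ) := by
    rw [tendsto_nhdsWithin_iff]
    constructor
    · rw [tendsto_zero_iff_norm_tendsto_zero]
      have : (fun z : ℂ => ‖Complex.exp z‖) = fun z : ℂ => Real.exp z.re := by
        funext z
        rw [Complex.norm_exp]
      rw [this]
      exact Real.tendsto_exp_atBot.comp Filter.tendsto_comap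
    · exact Filter.Eventually.of_forall (fun z => Complex.exp_ne_zero z)
  -- the comparison function
  set h : ℂ → ℂ := fun z => αl z - ((z.re:ℂ) + Lam p q z.im) with hh
  have hhcont : Continuous h := by
    apply hcont.sub
    exact (Complex.continuous_ofReal.comp Complex.continuous_re).add
      ((Lam_continuous hq).comp Complex.continuous_im)
  -- denominator identity
  have hden : ∀ z : ℂ, Complex.exp ((z.re:ℂ) + Lam p q z.im) = A (Complex.exp z) := by
    intro z
    rw [Complex.exp_add, Lam_exp hq]
    have h1 : Complex.exp z = Complex.exp (z.re:ℂ) * Complex.exp ((z.im:ℂ) * I) := by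
      rw [← Complex.exp_add, Complex.re_add_im]
    have h2 : (starRingEnd ℂ) (Complex.exp z)
        = Complex.exp (z.re:ℂ) * Complex.exp (-((z.im:ℂ) * I)) := by
      rw [← Complex.exp_conj, ← Complex.exp_add]
      congr 1
      have : (starRingEnd ℂ) z = (z.re:ℂ) - (z.im:ℂ)*I := by
        apply Complex.ext <;> simp
      rw [this]
      ring
    rw [hrep, h2, h1]
    ring
  -- exp h identity
  have hexph_eq : ∀ z : ℂ, Complex.exp (h z)
      = 1 + (αf (Complex.exp z) - A (Complex.exp z)) / (A (Complex.exp z)) := by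
    intro z
    have hAexp : A (Complex.exp z) ≠ 0 := hAne _ (Complex.exp_ne_zero z)
    rw [hh]
    simp only
    rw [Complex.exp_sub, hlift, hden]
    field_simp
    ring
  have hexph : Filter.Tendsto (fun z : ℂ => Complex.exp (h z))
      (Filter.comap Complex.re Filter.atBot) (nhds 1) := by
    have := Filter.Tendsto.const_add (1:ℂ) (hftend.comp hexp0)
    rw [add_zero] at this
    apply this.congr
    intro z
    rw [hexph_eq z]
    rfl
  -- get half plane where exp h is near 1
  have hball : ∀ᶠ z : ℂ in Filter.comap Complex.re Filter.atBot,
      ‖Complex.exp (h z) - 1‖ < 1 := by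
    have h1 := hexph.eventually (Metric.ball_mem_nhds (1:ℂ) one_pos)
    apply h1.mono
    intro z hz
    rwa [dist_eq_norm] at hz
  obtain ⟨t, ht, hsub⟩ := hball.exists_mem
  rw [Filter.mem_comap] at ht
  obtain ⟨s, hs, hsub2⟩ := ht
  rw [Filter.mem_atBot_sets] at hs
  obtain ⟨R, hR⟩ := hs
  have hRball : ∀ z : ℂ, z.re ≤ R → ‖Complex.exp (h z) - 1‖ < 1 := by
    intro z hz
    exact hsub z (hsub2 (hR _ hz))
  -- half plane S
  set S : Set ℂ := {z : ℂ | z.re ≤ R} with hS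
  have hSconv : Convex ℝ S := by
    have : IsLinearMap ℝ Complex.re := ⟨Complex.add_re, fun c x => by
      simp [Complex.smul_re]⟩
    exact convex_halfSpace_le this R
  have hSpre : IsPreconnected S := hSconv.isPreconnected
  have hslit : ∀ z ∈ S, Complex.exp (h z) ∈ Complex.slitPlane := by
    intro z hz
    apply Complex.mem_slitPlane_iff.2
    left
    have h1 := hRball z hz
    have h2 : |(Complex.exp (h z) - 1).re| ≤ ‖Complex.exp (h z) - 1‖ := by
      exact Complex.abs_re_le_norm _
    have h3 : (Complex.exp (h z) - 1).re = (Complex.exp (h z)).re - 1 := by simp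
    rw [h3] at h2
    cases' abs_le.mp h2 with ha hb
    linarith
  -- the lattice-valued function g
  set g : ℂ → ℂ := fun z => h z - Complex.log (Complex.exp (h z)) with hg
  have hgint : ∀ z ∈ S, ∃ n : ℤ, g z = (n:ℂ) * (2*(π:ℂ)*I) := by
    intro z _
    have h1 : Complex.exp (h z) = Complex.exp (Complex.log (Complex.exp (h z))) := by
      rw [Complex.exp_log (Complex.exp_ne_zero _)]
    obtain ⟨n, hn⟩ := Complex.exp_eq_exp_iff_exists_int.mp h1
    refine ⟨n, ?_⟩
    show h z - Complex.log (Complex.exp (h z)) = (n:ℂ) * (2*(π:ℂ)*I)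
    linear_combination hn
  have hgcont : ContinuousOn g S := by
    apply ContinuousOn.sub hhcont.continuousOn
    intro z hz
    apply ContinuousWithinAt.mono _ (Set.subset_univ S)
    apply ContinuousAt.continuousWithinAt
    exact ((Complex.continuous_exp.comp hhcont).continuousAt).clog (hslit z hz)
  -- g is constant on S
  have hmem : (R:ℂ) ∈ S := by rw [hS]; simp
  obtain ⟨k, hk⟩ := hgint (R:ℂ) hmem
  have hgconst : ∀ z ∈ S, g z = (k:ℂ) * (2*(π:ℂ)*I) := by
    intro z hz
    rw [aux_const_of_intC hSpre hgcont hgint z hz (R:ℂ) hmem, hk]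
  refine ⟨k, ?_⟩
  -- tail: log ∘ exp ∘ h tends to 0
  have h1slit : (1:ℂ) ∈ Complex.slitPlane := Complex.mem_slitPlane_iff.2 (Or.inl (by norm_num))
  have htail : Filter.Tendsto (fun z : ℂ => Complex.log (Complex.exp (h z)))
      (Filter.comap Complex.re Filter.atBot) (nhds 0) := by
    have := hexph.clog h1slit
    rwa [Complex.log_one] at this
  apply Filter.Tendsto.congr' _ htail
  have hev : {z : ℂ | z.re ≤ R} ∈ Filter.comap Complex.re Filter.atBot :=
    Filter.preimage_mem_comap (Filter.Iic_mem_atBot R)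
  apply Filter.eventuallyEq_of_mem hev
  intro z hz
  have h1 := hgconst z hz
  rw [hg] at h1
  simp only at h1
  have h2 : Complex.log (Complex.exp (h z)) = h z - (k:ℂ) * (2*(π:ℂ)*I) := by
    linear_combination -h1
  show Complex.log (Complex.exp (h z)) = αl z - ((z.re:ℂ) + Lam p q z.im) - (k:ℂ)*(2*(π:ℂ)*I)
  rw [h2]


private lemma aux_A_exp (A : ℂ →L[ℝ] ℂ) (r : ℝ) (w : ℂ) :
    A (Complex.exp ((r:ℂ)) * w) = Complex.exp ((r:ℂ)) * A w := by
  rw [← Complex.ofReal_exp, ← Complex.real_smul, map_smul, Complex.real_smul]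

private lemma aux_circ (A : ℂ →L[ℝ] ℂ) (p q : ℂ)
    (hrep : ∀ v : ℂ, A v = p * v + q * (starRingEnd ℂ) v)
    (hq : ‖q‖ < ‖p‖) (y : ℝ) :
    Complex.exp (Lam p q y) = A (Complex.exp ((y:ℂ) * I)) := by
  rw [Lam_exp hq, hrep]
  congr 1
  rw [← Complex.exp_conj]
  congr 1
  apply Complex.ext <;> simp

private lemma aux_exp_comp (A B : ℂ →L[ℝ] ℂ) (pA qA pB qB : ℂ)
    (hrepA : ∀ v : ℂ, A v = pA * v + qA * (starRingEnd ℂ) v)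
    (hqA : ‖qA‖ < ‖pA‖)
    (hrepB : ∀ v : ℂ, B v = pB * v + qB * (starRingEnd ℂ) v)
    (hqB : ‖qB‖ < ‖pB‖) (y : ℝ) :
    Complex.exp ((((Lam pB qB y).re:ℂ)) + Lam pA qA ((Lam pB qB y).im))
      = A (B (Complex.exp ((y:ℂ)*I))) := by
  have h1 : B (Complex.exp ((y:ℂ)*I)) = Complex.exp (Lam pB qB y) :=
    (aux_circ B pB qB hrepB hqB y).symm
  rw [h1]
  have h2 : Complex.exp (Lam pB qB y)
      = Complex.exp (((Lam pB qB y).re:ℂ)) * Complex.exp (((Lam pB qB y).im:ℂ) * I) := by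
    rw [← Complex.exp_add, Complex.re_add_im]
  rw [h2, aux_A_exp, ← aux_circ A pA qA hrepA hqA ((Lam pB qB y).im), Complex.exp_add]

private lemma aux_lin_comm (A B : ℂ →L[ℝ] ℂ) (pA qA pB qB : ℂ)
    (hrepA : ∀ v : ℂ, A v = pA * v + qA * (starRingEnd ℂ) v)
    (hqA : ‖qA‖ < ‖pA‖)
    (hrepB : ∀ v : ℂ, B v = pB * v + qB * (starRingEnd ℂ) v)
    (hqB : ‖qB‖ < ‖pB‖)
    (hAB : ∀ v : ℂ, A (B v) = B (A v)) (y : ℝ) :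
    (((Lam pB qB y).re:ℂ) + Lam pA qA ((Lam pB qB y).im))
      - (((Lam pA qA y).re:ℂ) + Lam pB qB ((Lam pA qA y).im)) = 0 := by
  set D : ℝ → ℂ := fun y =>
    (((Lam pB qB y).re:ℂ) + Lam pA qA ((Lam pB qB y).im))
      - (((Lam pA qA y).re:ℂ) + Lam pB qB ((Lam pA qA y).im)) with hD
  have hlat : ∀ y : ℝ, ∃ n : ℤ, D y = (n:ℂ) * (2*(π:ℂ)*I) := by
    intro y
    have h1 := aux_exp_comp A B pA qA pB qB hrepA hqA hrepB hqB y
    have h2 := aux_exp_comp B A pB qB pA qA hrepB hqB hrepA hqA y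
    rw [hAB] at h1
    rw [← h2] at h1
    obtain ⟨n, hn⟩ := Complex.exp_eq_exp_iff_exists_int.mp h1
    exact ⟨n, by rw [hD]; simp only; linear_combination hn⟩
  have hDcont : Continuous D := by
    have hc1 := Lam_continuous hqA
    have hc2 := Lam_continuous hqB
    apply Continuous.sub
    · exact (Complex.continuous_ofReal.comp (Complex.continuous_re.comp hc2)).add
        (hc1.comp (Complex.continuous_im.comp hc2))
    · exact (Complex.continuous_ofReal.comp (Complex.continuous_re.comp hc1)).add
        (hc2.comp (Complex.continuous_im.comp hc1))
  have hconst : ∀ y : ℝ, D y = D 0 := by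
    intro y
    exact aux_const_of_intC isPreconnected_univ hDcont.continuousOn
      (fun z _ => hlat z) y (Set.mem_univ _) 0 (Set.mem_univ _)
  obtain ⟨m, hm⟩ := hlat 0
  have hDm : ∀ y : ℝ, D y = (m:ℂ) * (2*(π:ℂ)*I) := fun y => (hconst y).trans hm
  -- extract the angle identity
  have hang : ∀ y : ℝ, (Lam pA qA ((Lam pB qB y).im)).im
      = (Lam pB qB ((Lam pA qA y).im)).im + 2*π*(m:ℝ) := by
    intro y
    have h1 := congrArg Complex.im (hDm y)
    rw [hD] at h1
    simp only [Complex.sub_im, Complex.add_im, Complex.ofReal_im] at h1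
    have h2 : ((m:ℂ) * (2*(π:ℂ)*I)).im = (m:ℝ) * (2*π) := by simp [Complex.mul_im]
    rw [h2] at h1
    linarith [h1]
  have hm0 : m = 0 := by
    apply aux_m_zero (Lam_im_monotone hqA) (Lam_im_monotone hqB)
      (fun k y => Lam_im_equiv hqA k y) (fun k y => Lam_im_equiv hqB k y)
      (fun y => Lam_im_bound hqA y)
    intro y
    exact hang y
  have hfin := hDm y
  rw [hm0] at hfin
  simpa using hfin


/-- **Vanishing of the Euler class for `C¹` actions of `ℤ ⊕ ℤ` with a common
fixed point.** If `α, β` are commuting orientation-preserving `C¹`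
diffeomorphisms of the plane `ℝ² ≅ ℂ` fixing `0`, then the commutator of any
deck-equivariant homeomorphism lifts `αl, βl` through `exp : ℂ → ℂ ∖ {0}` is
the identity: the action admits commuting lifts and its Euler number is `0`. -/
theorem euler_class_vanishes_common_fixed_point
    (α β : Equiv.Perm ℂ)
    (hα : IsOrientationPreservingC1Diffeo α)
    (hβ : IsOrientationPreservingC1Diffeo β)
    (hcomm : ∀ z : ℂ, α (β z) = β (α z))
    (hα0 : α 0 = 0) (hβ0 : β 0 = 0)
    (αl βl : Equiv.Perm ℂ)
    (hαl : IsHomeoPlane αl) (hβl : IsHomeoPlane βl)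
    (hliftα : IsDeckEquivariantLift α αl) (hliftβ : IsDeckEquivariantLift β βl) :
    ∀ z : ℂ, ⁅αl, βl⁆ z = z := by
  have hπ : (0:ℝ) < π := Real.pi_pos
  -- derivatives at the common fixed point
  have hdα : DifferentiableAt ℝ (⇑α) 0 := (hα.1.differentiable one_ne_zero).differentiableAt
  have hdβ : DifferentiableAt ℝ (⇑β) 0 := (hβ.1.differentiable one_ne_zero).differentiableAt
  set A : ℂ →L[ℝ] ℂ := fderiv ℝ (⇑α) 0 with hA
  set B : ℂ →L[ℝ] ℂ := fderiv ℝ (⇑β) 0 with hB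
  have hdA : HasFDerivAt (⇑α) A 0 := hdα.hasFDerivAt
  have hdB : HasFDerivAt (⇑β) B 0 := hdβ.hasFDerivAt
  obtain ⟨pA, qA, hrepA, hqA⟩ := aux_pq A (hα.2.2 0)
  obtain ⟨pB, qB, hrepB, hqB⟩ := aux_pq B (hβ.2.2 0)
  -- the derivatives commute
  have hAB : ∀ v : ℂ, A (B v) = B (A v) := by
    have hc1 : fderiv ℝ (⇑α ∘ ⇑β) 0 = A.comp B := by
      rw [fderiv_comp (x := 0) (by rw [hβ0]; exact hdα) hdβ, hβ0]
    have hc2 : fderiv ℝ (⇑β ∘ ⇑α) 0 = B.comp A := by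
      rw [fderiv_comp (x := 0) (by rw [hα0]; exact hdβ) hdα, hα0]
    have hfe : (⇑α ∘ ⇑β) = (⇑β ∘ ⇑α) := funext (fun z => hcomm z)
    have hcc : A.comp B = B.comp A := by rw [← hc1, ← hc2, hfe]
    intro v
    have h := ContinuousLinearMap.ext_iff.mp hcc v
    simpa using h
  -- the asymptotic comparison of the lifts with linear-model lifts
  obtain ⟨kα, hkα⟩ := aux_lift (⇑α) A pA qA hrepA hqA hdA hα0 (⇑αl) hαl.1 hliftα.1
  obtain ⟨kβ, hkβ⟩ := aux_lift (⇑β) B pB qB hrepB hqB hdB hβ0 (⇑βl) hβl.1 hliftβ.1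
  set Eα : ℂ → ℂ := fun z => αl z - ((z.re:ℂ) + Lam pA qA z.im) - (kα:ℂ) * (2*(π:ℂ)*I) with hEα
  set Eβ : ℂ → ℂ := fun z => βl z - ((z.re:ℂ) + Lam pB qB z.im) - (kβ:ℂ) * (2*(π:ℂ)*I) with hEβ
  -- the commutator defect
  set Dl : ℂ → ℂ := fun z => αl (βl z) - βl (αl z) with hDl
  have hDlat : ∀ z : ℂ, ∃ n : ℤ, Dl z = (n:ℂ) * (2*(π:ℂ)*I) := by
    intro z
    have h1 : Complex.exp (αl (βl z)) = Complex.exp (βl (αl z)) := by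
      rw [hliftα.1, hliftβ.1, hliftβ.1, hliftα.1]
      exact hcomm _
    obtain ⟨n, hn⟩ := Complex.exp_eq_exp_iff_exists_int.mp h1
    refine ⟨n, ?_⟩
    show αl (βl z) - βl (αl z) = (n:ℂ) * (2*(π:ℂ)*I)
    linear_combination hn
  have hDcont : Continuous Dl := (hαl.1.comp hβl.1).sub (hβl.1.comp hαl.1)
  have hDconst : ∀ z : ℂ, Dl z = Dl 0 := fun z =>
    aux_const_of_intC isPreconnected_univ hDcont.continuousOn
      (fun w _ => hDlat w) z (Set.mem_univ _) 0 (Set.mem_univ _)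
  -- abbreviations for the linear data
  set rA0 : ℝ := (Lam pA qA 0).re with hrA0
  set θA0 : ℝ := (Lam pA qA 0).im with hθA0
  set rB0 : ℝ := (Lam pB qB 0).re with hrB0
  set θB0 : ℝ := (Lam pB qB 0).im with hθB0
  -- t ↦ (t:ℂ) tends to the left filter
  have hcoe : Filter.Tendsto (fun t : ℝ => (t:ℂ)) Filter.atBot
      (Filter.comap Complex.re Filter.atBot) := by
    rw [Filter.tendsto_comap_iff]
    have : (Complex.re ∘ fun t : ℝ => (t:ℂ)) = fun t : ℝ => t :=
      funext fun t => Complex.ofReal_re t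
    rw [this]
    exact Filter.tendsto_id
  have hεα : Filter.Tendsto (fun t : ℝ => Eα ((t:ℂ))) Filter.atBot (nhds 0) := hkα.comp hcoe
  have hεβ : Filter.Tendsto (fun t : ℝ => Eβ ((t:ℂ))) Filter.atBot (nhds 0) := hkβ.comp hcoe
  -- identities for lifts at real points
  have hidβ : ∀ t : ℝ, βl ((t:ℂ)) = (t:ℂ) + Lam pB qB 0 + (kβ:ℂ)*(2*(π:ℂ)*I) + Eβ ((t:ℂ)) := by
    intro t
    show βl ((t:ℂ)) = (t:ℂ) + Lam pB qB 0 + (kβ:ℂ)*(2*(π:ℂ)*I)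
      + (βl ((t:ℂ)) - ((((t:ℂ)).re:ℂ) + Lam pB qB ((t:ℂ)).im) - (kβ:ℂ) * (2*(π:ℂ)*I))
    rw [Complex.ofReal_re, Complex.ofReal_im]
    ring
  have hidα : ∀ t : ℝ, αl ((t:ℂ)) = (t:ℂ) + Lam pA qA 0 + (kα:ℂ)*(2*(π:ℂ)*I) + Eα ((t:ℂ)) := by
    intro t
    show αl ((t:ℂ)) = (t:ℂ) + Lam pA qA 0 + (kα:ℂ)*(2*(π:ℂ)*I)
      + (αl ((t:ℂ)) - ((((t:ℂ)).re:ℂ) + Lam pA qA ((t:ℂ)).im) - (kα:ℂ) * (2*(π:ℂ)*I))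
    rw [Complex.ofReal_re, Complex.ofReal_im]
    ring
  -- re and im of the lifts at real points
  have hreβ : ∀ t : ℝ, (βl ((t:ℂ))).re = t + rB0 + (Eβ ((t:ℂ))).re := by
    intro t
    have h := congrArg Complex.re (hidβ t)
    simp only [Complex.add_re, Complex.ofReal_re, Complex.mul_re, Complex.mul_im,
      Complex.I_re, Complex.I_im, Complex.ofReal_im, Complex.intCast_re, Complex.intCast_im] at h
    rw [h]; rw [hrB0]; ring_nf; simp
  have himβ : ∀ t : ℝ, (βl ((t:ℂ))).im = (θB0 + (Eβ ((t:ℂ))).im) + 2*π*(kβ:ℝ) := by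
    intro t
    have h := congrArg Complex.im (hidβ t)
    simp only [Complex.add_im, Complex.ofReal_im, Complex.mul_re, Complex.mul_im,
      Complex.I_re, Complex.I_im, Complex.ofReal_re, Complex.intCast_re, Complex.intCast_im] at h
    rw [h]; rw [hθB0]; ring_nf; simp; ring
  have hreα : ∀ t : ℝ, (αl ((t:ℂ))).re = t + rA0 + (Eα ((t:ℂ))).re := by
    intro t
    have h := congrArg Complex.re (hidα t)
    simp only [Complex.add_re, Complex.ofReal_re, Complex.mul_re, Complex.mul_im,
      Complex.I_re, Complex.I_im, Complex.ofReal_im, Complex.intCast_re, Complex.intCast_im] at h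
    rw [h]; rw [hrA0]; ring_nf; simp
  have himα : ∀ t : ℝ, (αl ((t:ℂ))).im = (θA0 + (Eα ((t:ℂ))).im) + 2*π*(kα:ℝ) := by
    intro t
    have h := congrArg Complex.im (hidα t)
    simp only [Complex.add_im, Complex.ofReal_im, Complex.mul_re, Complex.mul_im,
      Complex.I_re, Complex.I_im, Complex.ofReal_re, Complex.intCast_re, Complex.intCast_im] at h
    rw [h]; rw [hθA0]; ring_nf; simp; ring
  -- the lifted orbits tend to the left filter
  have hu_l : Filter.Tendsto (fun t : ℝ => βl ((t:ℂ))) Filter.atBot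
      (Filter.comap Complex.re Filter.atBot) := by
    rw [Filter.tendsto_comap_iff]
    have hfn : (Complex.re ∘ fun t : ℝ => βl ((t:ℂ))) = fun t : ℝ => t + rB0 + (Eβ ((t:ℂ))).re :=
      funext fun t => hreβ t
    rw [hfn]
    have hbd : ∀ᶠ t : ℝ in Filter.atBot,
        t + rB0 + (Eβ ((t:ℂ))).re ≤ t + (rB0 + 1) := by
      have h1 : ∀ᶠ t : ℝ in Filter.atBot, ‖Eβ ((t:ℂ))‖ < 1 :=
        (NormedAddCommGroup.tendsto_nhds_zero.mp hεβ) 1 one_pos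
      apply h1.mono
      intro t ht
      have h2 : |(Eβ ((t:ℂ))).re| ≤ ‖Eβ ((t:ℂ))‖ := by
        exact Complex.abs_re_le_norm _
      cases' abs_le.mp h2 with ha hb
      linarith
    apply Filter.tendsto_atBot_mono' Filter.atBot hbd
    exact Filter.tendsto_atBot_add_const_right Filter.atBot (rB0+1) Filter.tendsto_id
  have hv_l : Filter.Tendsto (fun t : ℝ => αl ((t:ℂ))) Filter.atBot
      (Filter.comap Complex.re Filter.atBot) := by
    rw [Filter.tendsto_comap_iff]
    have hfn : (Complex.re ∘ fun t : ℝ => αl ((t:ℂ))) = fun t : ℝ => t + rA0 + (Eα ((t:ℂ))).re :=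
      funext fun t => hreα t
    rw [hfn]
    have hbd : ∀ᶠ t : ℝ in Filter.atBot,
        t + rA0 + (Eα ((t:ℂ))).re ≤ t + (rA0 + 1) := by
      have h1 : ∀ᶠ t : ℝ in Filter.atBot, ‖Eα ((t:ℂ))‖ < 1 :=
        (NormedAddCommGroup.tendsto_nhds_zero.mp hεα) 1 one_pos
      apply h1.mono
      intro t ht
      have h2 : |(Eα ((t:ℂ))).re| ≤ ‖Eα ((t:ℂ))‖ := by
        exact Complex.abs_re_le_norm _
      cases' abs_le.mp h2 with ha hb
      linarith
    apply Filter.tendsto_atBot_mono' Filter.atBot hbd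
    exact Filter.tendsto_atBot_add_const_right Filter.atBot (rA0+1) Filter.tendsto_id
  -- key pointwise identities for the compositions
  have hkey1 : ∀ t : ℝ, αl (βl ((t:ℂ)))
      - ((t:ℂ) + ((rB0:ℂ) + Lam pA qA θB0) + ((kα:ℂ)+(kβ:ℂ))*(2*(π:ℂ)*I))
      = ((Eβ ((t:ℂ))).re : ℂ)
        + (Lam pA qA (θB0 + (Eβ ((t:ℂ))).im) - Lam pA qA θB0) + Eα (βl ((t:ℂ))) := by
    intro t
    have hEid : Eα (βl ((t:ℂ))) = αl (βl ((t:ℂ)))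
        - (((βl ((t:ℂ))).re:ℂ) + Lam pA qA ((βl ((t:ℂ))).im)) - (kα:ℂ)*(2*(π:ℂ)*I) := rfl
    rw [hEid, hreβ t, himβ t]
    have heq : ((θB0 + (Eβ ((t:ℂ))).im) + 2*π*(kβ:ℝ))
        = ((θB0 + (Eβ ((t:ℂ))).im) + 2*π*((kβ:ℤ):ℝ)) := by norm_num
    rw [heq, Lam_equiv hqA kβ]
    push_cast
    ring
  have hkey2 : ∀ t : ℝ, βl (αl ((t:ℂ)))
      - ((t:ℂ) + ((rA0:ℂ) + Lam pB qB θA0) + ((kα:ℂ)+(kβ:ℂ))*(2*(π:ℂ)*I))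
      = ((Eα ((t:ℂ))).re : ℂ)
        + (Lam pB qB (θA0 + (Eα ((t:ℂ))).im) - Lam pB qB θA0) + Eβ (αl ((t:ℂ))) := by
    intro t
    have hEid : Eβ (αl ((t:ℂ))) = βl (αl ((t:ℂ)))
        - (((αl ((t:ℂ))).re:ℂ) + Lam pB qB ((αl ((t:ℂ))).im)) - (kβ:ℂ)*(2*(π:ℂ)*I) := rfl
    rw [hEid, hreα t, himα t]
    have heq : ((θA0 + (Eα ((t:ℂ))).im) + 2*π*(kα:ℝ))
        = ((θA0 + (Eα ((t:ℂ))).im) + 2*π*((kα:ℤ):ℝ)) := by norm_num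
    rw [heq, Lam_equiv hqB kα]
    push_cast
    ring
  -- the three vanishing terms, composed limits
  have hT1 : Filter.Tendsto (fun t : ℝ => αl (βl ((t:ℂ)))
      - ((t:ℂ) + ((rB0:ℂ) + Lam pA qA θB0) + ((kα:ℂ)+(kβ:ℂ))*(2*(π:ℂ)*I)))
      Filter.atBot (nhds 0) := by
    apply Filter.Tendsto.congr (fun t => (hkey1 t).symm)
    have t1 : Filter.Tendsto (fun t : ℝ => ((Eβ ((t:ℂ))).re : ℂ)) Filter.atBot (nhds 0) := by
      have h := (Complex.continuous_ofReal.tendsto 0).comp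
        ((Complex.continuous_re.tendsto 0).comp hεβ)
      exact h
    have t2 : Filter.Tendsto (fun t : ℝ => Lam pA qA (θB0 + (Eβ ((t:ℂ))).im) - Lam pA qA θB0)
        Filter.atBot (nhds 0) := by
      have h1 : Filter.Tendsto (fun t : ℝ => θB0 + (Eβ ((t:ℂ))).im) Filter.atBot (nhds θB0) := by
        have h2 := (Complex.continuous_im.tendsto 0).comp hεβ
        have h3 := (tendsto_const_nhds (x := θB0) (f := Filter.atBot (α := ℝ))).add h2
        simpa using h3
      have h4 := ((Lam_continuous hqA).tendsto θB0).comp h1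
      have h5 := h4.sub (tendsto_const_nhds (x := Lam pA qA θB0) (f := Filter.atBot (α := ℝ)))
      simpa using h5
    have t3 : Filter.Tendsto (fun t : ℝ => Eα (βl ((t:ℂ)))) Filter.atBot (nhds 0) :=
      hkα.comp hu_l
    have h := (t1.add t2).add t3
    simpa using h
  have hT2 : Filter.Tendsto (fun t : ℝ => βl (αl ((t:ℂ)))
      - ((t:ℂ) + ((rA0:ℂ) + Lam pB qB θA0) + ((kα:ℂ)+(kβ:ℂ))*(2*(π:ℂ)*I)))
      Filter.atBot (nhds 0) := by
    apply Filter.Tendsto.congr (fun t => (hkey2 t).symm)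
    have t1 : Filter.Tendsto (fun t : ℝ => ((Eα ((t:ℂ))).re : ℂ)) Filter.atBot (nhds 0) := by
      have h := (Complex.continuous_ofReal.tendsto 0).comp
        ((Complex.continuous_re.tendsto 0).comp hεα)
      exact h
    have t2 : Filter.Tendsto (fun t : ℝ => Lam pB qB (θA0 + (Eα ((t:ℂ))).im) - Lam pB qB θA0)
        Filter.atBot (nhds 0) := by
      have h1 : Filter.Tendsto (fun t : ℝ => θA0 + (Eα ((t:ℂ))).im) Filter.atBot (nhds θA0) := by
        have h2 := (Complex.continuous_im.tendsto 0).comp hεα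
        have h3 := (tendsto_const_nhds (x := θA0) (f := Filter.atBot (α := ℝ))).add h2
        simpa using h3
      have h4 := ((Lam_continuous hqB).tendsto θA0).comp h1
      have h5 := h4.sub (tendsto_const_nhds (x := Lam pB qB θA0) (f := Filter.atBot (α := ℝ)))
      simpa using h5
    have t3 : Filter.Tendsto (fun t : ℝ => Eβ (αl ((t:ℂ)))) Filter.atBot (nhds 0) :=
      hkβ.comp hv_l
    have h := (t1.add t2).add t3
    simpa using h
  -- the linear commutator vanishes
  have hlin := aux_lin_comm A B pA qA pB qB hrepA hqA hrepB hqB hAB 0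
  -- combine: Dl ∘ coe tends to 0
  have hTD : Filter.Tendsto (fun t : ℝ => Dl ((t:ℂ))) Filter.atBot (nhds 0) := by
    have h12 := hT1.sub hT2
    rw [sub_zero] at h12
    apply Filter.Tendsto.congr ?_ h12
    intro t
    show _ = αl (βl ((t:ℂ))) - βl (αl ((t:ℂ)))
    rw [hrB0, hθB0, hrA0, hθA0] at *
    linear_combination -hlin
  -- conclude that the defect is zero
  have hconst' : Filter.Tendsto (fun t : ℝ => Dl ((t:ℂ))) Filter.atBot (nhds (Dl 0)) := by
    have : (fun t : ℝ => Dl ((t:ℂ))) = fun _ : ℝ => Dl 0 := funext fun t => hDconst _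
    rw [this]
    exact tendsto_const_nhds
  have hDl0 : Dl 0 = 0 := tendsto_nhds_unique hconst' hTD
  have hzero : ∀ w : ℂ, αl (βl w) = βl (αl w) := by
    intro w
    have h1 : Dl w = 0 := by rw [hDconst w, hDl0]
    have h2 : αl (βl w) - βl (αl w) = 0 := h1
    exact sub_eq_zero.mp h2
  -- finish
  intro z
  rw [commutatorElement_def]
  show αl (βl (αl⁻¹ (βl⁻¹ z))) = z
  rw [hzero]; simp
end LamFacts
end
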